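/- arXiv:2505.23696 — 2 statements merged into one kernel-verified Lean document; each statement's English description precedes it below -/
import Mathlib

section
/- Let I be an ideal in a commutative ring R and h ∈ R with (I : h) = (I : h²). Then I = (I : h) ∩ (I + ⟨h⟩). -/
/-- Splitting tool: if `(I : h) = (I : h²)`, then `I = (I : h) ∩ (I + ⟨h⟩)`. -/
theorem ideal_splitting (R : Type*) [CommRing R] (I : Ideal R) (h : R)
    (hq : I.colon (Ideal.span {h}) = I.colon (Ideal.span {h ^ 2})) :
    I = I.colon (Ideal.span {h}) ⊓ (I + Ideal.span {h}) := by
  apply le_antisymm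
  · intro f hf
    exact ⟨Ideal.mem_colon_span_singleton.mpr (I.mul_mem_right h hf), Ideal.mem_sup_left hf⟩
  · rintro f ⟨hf1, hf2⟩
    obtain ⟨a, ha, b, hb, rfl⟩ := Submodule.mem_sup.mp hf2
    rw [Ideal.mem_span_singleton] at hb
    obtain ⟨c, rfl⟩ := hb
    have h1 : (a + h * c) * h ∈ I := Ideal.mem_colon_span_singleton.mp hf1
    have h2 : c * h ^ 2 ∈ I := by
      have := I.sub_mem h1 (I.mul_mem_right h ha)
      convert this using 1; ring
    have h3 : c ∈ I.colon (Ideal.span {h}) := by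
      rw [hq]; exact Ideal.mem_colon_span_singleton.mpr h2
    have h4 : c * h ∈ I := Ideal.mem_colon_span_singleton.mp h3
    have := I.add_mem ha h4
    convert this using 1; ring
end

section
/- Let U be a subset of the variables of a polynomial ring K[Y] and I an ideal with I ∩ K[U] = {0} (an independent set modulo I). Then |U| is at most the Krull dimension of K[Y]/I. Equivalently, if |U| exceeds dim(K[Y]/I), then I ∩ K[U] ≠ {0}. -/
/-!
The images of the variables of `U` in `K[Y]/I` generate a polynomial ring, and we may pass to
a prime `P ⊇ I` with `P ∩ K[U] = 0`, so it suffices to show that a finitely generated domain `A`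
over a field containing `n` algebraically independent elements has dimension at least `n`.
Split off one element `x`, transcendental over the subalgebra `R` generated by the others.
Localizing `A` at `R ∖ {0}` gives a finitely generated algebra over `Frac R` in which `x` is
still transcendental, so by Zariski's lemma it is not a field: it has a nonzero prime, whose
contraction `Q` to `A` is nonzero and meets `R` only in `0`. The remaining elements stay
algebraically independent in `A/Q`, and `dim A/Q + 1 ≤ dim A` closes the induction.
-/

open MvPolynomial

universe u

theorem Ideal.exists_le_isPrime_comap_eq_bot {R A F : Type*} [CommRing R] [IsDomain R]
    [CommRing A] [FunLike F R A] [RingHomClass F R A] {f : F} {I : Ideal A}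
    (hI : I.comap f = ⊥) :
    ∃ P : Ideal A, P.IsPrime ∧ I ≤ P ∧ P.comap f = ⊥ := by
  have hdisj : Disjoint (I : Set A) ((nonZeroDivisors R).map f) := by
    rw [Set.disjoint_left]
    rintro _ hrI ⟨r, hr, rfl⟩
    exact nonZeroDivisors.ne_zero hr (by simpa [hI] using (show r ∈ I.comap f from hrI))
  obtain ⟨P, hP, hIP, hPdisj⟩ := Ideal.exists_le_prime_disjoint I _ hdisj
  refine ⟨P, hP, hIP, eq_bot_iff.mpr fun r hr => ?_⟩
  by_contra hr0
  exact Set.disjoint_left.mp hPdisj hr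
    (Submonoid.mem_map_of_mem f (mem_nonZeroDivisors_of_ne_zero hr0))

theorem algebraicIndependent_quotient_mk_iff {ι R A : Type*} [CommRing R] [CommRing A]
    [Algebra R A] {v : ι → A} {Q : Ideal A} :
    AlgebraicIndependent R (Ideal.Quotient.mk Q ∘ v) ↔ Q.comap (aeval (R := R) v) = ⊥ := by
  rw [algebraicIndependent_iff_injective_aeval, injective_iff_map_eq_zero, eq_bot_iff]
  refine forall_congr' fun p => ?_
  rw [Ideal.mem_bot, Ideal.mem_comap, ← Ideal.Quotient.eq_zero_iff_mem,
    ← Ideal.Quotient.mkₐ_eq_mk R, comp_aeval_apply]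
  rfl

theorem AlgebraicIndependent.comap_aeval_eq_bot {ι R A : Type*} [CommRing R] [CommRing A]
    [Algebra R A] {v : ι → A} (hv : AlgebraicIndependent R v) {Q : Ideal A}
    (hQ : Q.comap (algebraMap (Algebra.adjoin R (Set.range v)) A) = ⊥) :
    Q.comap (aeval (R := R) v) = ⊥ := by
  rw [eq_bot_iff]
  intro p hp
  rw [Ideal.mem_comap, ← hv.algebraMap_aevalEquiv, ← Ideal.mem_comap, hQ, Ideal.mem_bot] at hp
  exact Ideal.mem_bot.mpr ((map_eq_zero_iff _ hv.aevalEquiv.injective).mp hp)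

theorem exists_isPrime_ne_bot_comap_eq_bot_of_transcendental {R A : Type u} [CommRing R]
    [IsDomain R] [CommRing A] [IsDomain A] [Algebra R A] [Algebra.FiniteType R A] {x : A}
    (hx : Transcendental R x) :
    ∃ Q : Ideal A, Q.IsPrime ∧ Q ≠ ⊥ ∧ Q.comap (algebraMap R A) = ⊥ := by
  have hinj : Function.Injective (algebraMap R A) := by
    by_contra h
    exact hx ((Algebra.isAlgebraic_of_not_injective h).isAlgebraic x)
  let S := Algebra.algebraMapSubmonoid A (nonZeroDivisors R)
  have hS : S ≤ nonZeroDivisors A := map_le_nonZeroDivisors_of_injective _ hinj le_rfl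
  let T := Localization S
  have : IsLocalization ((nonZeroDivisors R).map (algebraMap R A)) T :=
    inferInstanceAs (IsLocalization S T)
  have : IsDomain T := IsLocalization.isDomain_localization hS
  have : Algebra.FiniteType (FractionRing R) T := by
    rw [← RingHom.finiteType_algebraMap] at *
    exact RingHom.finiteType_localizationPreserves _ (nonZeroDivisors R) _ _ ‹_›
  have hT : ¬ IsField T := by
    intro hfield
    let := hfield.toField
    have : Module.Finite (FractionRing R) T := finite_of_finite_type_of_isJacobsonRing _ T
    have : Algebra.IsAlgebraic R (FractionRing R) :=
      IsLocalization.isAlgebraic _ (nonZeroDivisors R)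
    have hxT : Transcendental R (algebraMap A T x) :=
      (transcendental_algebraMap_iff (IsLocalization.injective T hS)).mpr hx
    exact hxT.extendScalars (FractionRing R) (Algebra.IsIntegral.isIntegral _).isAlgebraic
  obtain ⟨P, hP0, hP⟩ := Ring.not_isField_iff_exists_prime.mp hT
  refine ⟨P.comap (algebraMap A T), Ideal.IsPrime.comap _, ?_, ?_⟩
  · intro h
    apply hP0
    rw [← IsLocalization.map_under S T P, Ideal.under, h, Ideal.map_bot]
  · refine eq_bot_iff.mpr fun r hr => ?_
    by_contra hr0
    have hunit : IsUnit (algebraMap A T (algebraMap R A r)) := IsLocalization.map_units T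
      ⟨_, Submonoid.mem_map_of_mem _ (mem_nonZeroDivisors_of_ne_zero hr0)⟩
    exact hP.ne_top (P.eq_top_of_isUnit_mem hr hunit)

theorem AlgebraicIndependent.natCard_le_ringKrullDim {ι : Type*} [Finite ι] {K A : Type u}
    [Field K] [CommRing A] [IsDomain A] [Algebra K A] [Algebra.FiniteType K A] {v : ι → A}
    (hv : AlgebraicIndependent K v) : (Nat.card ι : WithBot ℕ∞) ≤ ringKrullDim A := by
  induction ι using Finite.induction_empty_option generalizing A with
  | of_equiv e ih =>
    rw [← Nat.card_congr e]
    exact ih (hv.comp e e.injective)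
  | h_empty => simpa using ringKrullDim_nonneg_of_nontrivial
  | @h_option ι _ ih =>
    set w := v ∘ some
    have hw : AlgebraicIndependent K w := hv.comp _ (Option.some_injective ι)
    have hv' : (fun o : Option ι ↦ o.elim (v none) w) = v := by
      funext o; cases o <;> rfl
    have htr : Transcendental (Algebra.adjoin K (Set.range w)) (v none) :=
      (hw.option_iff_transcendental _).mp (hv' ▸ hv)
    have : Algebra.FiniteType (Algebra.adjoin K (Set.range w)) A :=
      .of_restrictScalars_finiteType K _ A
    obtain ⟨Q, hQ, hQ0, hQw⟩ := exists_isPrime_ne_bot_comap_eq_bot_of_transcendental htr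
    have hdimQ := ih (algebraicIndependent_quotient_mk_iff.mpr (hw.comap_aeval_eq_bot hQw))
    obtain ⟨r, hrQ, hr0⟩ := Submodule.exists_mem_ne_zero_of_ne_bot hQ0
    have hdim := ringKrullDim_succ_le_of_surjective (Ideal.Quotient.mk Q)
      Ideal.Quotient.mk_surjective (mem_nonZeroDivisors_of_ne_zero hr0)
      (Ideal.Quotient.eq_zero_iff_mem.mpr hrQ)
    calc (Nat.card (Option ι) : WithBot ℕ∞) = (Nat.card ι : WithBot ℕ∞) + 1 := by simp
      _ ≤ ringKrullDim (A ⧸ Q) + 1 := by gcongr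
      _ ≤ ringKrullDim A := hdim

/-- If `U` is an independent set of variables modulo the ideal `I` of `K[Y]`
(i.e. `I ∩ K[U] = {0}`), then `|U|` is at most the Krull dimension of
`K[Y]/I`. -/
theorem independent_set_le_krullDim (K : Type*) [Field K] (m : ℕ)
    (I : Ideal (MvPolynomial (Fin m) K)) (U : Finset (Fin m))
    (hU : ∀ f : MvPolynomial {y : Fin m // y ∈ U} K,
      rename (Subtype.val : {y : Fin m // y ∈ U} → Fin m) f ∈ I → f = 0) :
    ((U.card : ℕ∞) : WithBot ℕ∞) ≤
      ringKrullDim (MvPolynomial (Fin m) K ⧸ I) := by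
  have hI : I.comap (aeval (R := K) (X ∘ Subtype.val : U → _)) = ⊥ := by
    rw [← rename_eq_aeval, eq_bot_iff]
    exact hU
  obtain ⟨P, hP, hIP, hPU⟩ := Ideal.exists_le_isPrime_comap_eq_bot hI
  have hindep : AlgebraicIndependent K (Ideal.Quotient.mk P ∘ X ∘ Subtype.val : U → _) :=
    algebraicIndependent_quotient_mk_iff.mpr hPU
  calc ((U.card : ℕ∞) : WithBot ℕ∞) = (Nat.card U : WithBot ℕ∞) := by simp
    _ ≤ ringKrullDim (MvPolynomial (Fin m) K ⧸ P) := hindep.natCard_le_ringKrullDim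
    _ ≤ ringKrullDim (MvPolynomial (Fin m) K ⧸ I) :=
      ringKrullDim_le_of_surjective _ (Ideal.Quotient.factor_surjective hIP)
end
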